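/- Let G be a strongly connected directed graph on a finite vertex set with period p, and suppose vertices a and b lie in the same cyclic class. Let D be an upper bound on the diameter of G. Then there exists a vertex c and an integer k ≤ 2D²/p + D such that there are directed walks of length exactly k from c to a and from c to b. In particular, k ≤ 2D² + D. -/

import Mathlib

/-- There is a directed walk of length `k` from `u` to `v` along relation `R`. -/
def HasWalk {V : Type*} (R : V → V → Prop) (u v : V) (k : ℕ) : Prop :=
  ∃ f : ℕ → V, f 0 = u ∧ f k = v ∧ ∀ i < k, R (f i) (f (i + 1))

/-!
Take `c = a`. Modulo any `d`, the length of a closed walk at `v` telescopes into lengths of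
closed walks of length at most `2D + 1` (shortest path to an edge, the edge, shortest path back),
so these short lengths already have gcd `p`. Starting from a cycle of length `α ≤ D + 1` through
`v` and adding the short lengths one at a time, Brauer's argument for the Frobenius problem shows
that every multiple `N` of `p` with `(D + 1)(2D + 1) < p (N + 3D + 2)` is the length of a closed
walk at `v`. With `e ≤ D` the distance from `a` to `b` and `p t` the least such multiple,
`k = p t + e` is the length both of a closed walk at `a` and of a closed walk at `a` of length
`p t` followed by a shortest path to `b`.
-/

theorem Nat.exists_mul_modEq_of_gcd_dvd {c h N : ℕ} (hh : 0 < h) (hN : Nat.gcd c h ∣ N) :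
    ∃ x, x * Nat.gcd c h < h ∧ x * c ≡ N [MOD h] := by
  obtain ⟨c', η, hcop, hc, hη⟩ := Nat.exists_coprime c h
  obtain ⟨N', hN'⟩ := hN
  generalize Nat.gcd c h = g at *
  subst hc hη hN'
  obtain ⟨x, hxη, hx⟩ := Nat.exists_mul_mod_eq_of_coprime N' hcop (by rintro rfl; simp at hh)
  refine ⟨x, by nlinarith, ?_⟩
  have : c' * x ≡ N' [MOD η] := hx
  simpa only [mul_comm, mul_left_comm] using this.mul_left' g

namespace AddSubmonoid

variable {S : AddSubmonoid ℕ} {a M : ℕ}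

-- `a * M < h * (N + a + M)` is the threshold `N > (a / h - 1) * M - a`, cleared of division.
-- Brauer's step: write `N = x * c + N'` with `x < h / gcd c h` and `h ∣ N'`.
theorem mem_of_gcd_dvd_of_forall_dvd {c h : ℕ} (hc : c ∈ S) (hcM : c ≤ M) (ha : 0 < a)
    (hha : h ∣ a) (haM : a ≤ M) (H : ∀ N, h ∣ N → a * M < h * (N + a + M) → N ∈ S)
    {N : ℕ} (hgN : Nat.gcd c h ∣ N) (hN : a * M < Nat.gcd c h * (N + a + M)) : N ∈ S := by
  obtain ⟨x, hxh, hx⟩ := Nat.exists_mul_modEq_of_gcd_dvd (Nat.pos_of_dvd_of_pos hha ha) hgN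
  obtain ⟨η, hη⟩ := Nat.gcd_dvd_right c h
  generalize Nat.gcd c h = g at *
  subst hη
  have hxη : x + 1 ≤ η := by nlinarith
  have hah : g * η ≤ a := Nat.le_of_dvd ha hha
  have hxc : x * c ≤ x * M := Nat.mul_le_mul_left x hcM
  have hle : x * c ≤ N := by
    by_contra! hlt
    obtain ⟨q, hq⟩ := (Nat.modEq_iff_dvd' hlt.le).mp hx.symm
    have hq0 : 0 < q := Nat.pos_of_ne_zero (by rintro rfl; omega)
    have h1 : N + g * η ≤ x * M := by
      have := Nat.le_mul_of_pos_right (g * η) hq0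
      omega
    have hgM : g ≤ M := by nlinarith
    have h2 : g * η * M + g * a ≤ a * M + g * (g * η) := by
      obtain ⟨d, rfl⟩ := Nat.exists_eq_add_of_le hah
      nlinarith [Nat.mul_le_mul_left d hgM]
    have h3 : g * (x * M) + g * M ≤ g * (η * M) := by
      rw [← Nat.mul_add, ← Nat.succ_mul]
      exact Nat.mul_le_mul_left g (Nat.mul_le_mul_right M hxη)
    nlinarith [Nat.mul_le_mul_left g h1]
  obtain ⟨N', rfl⟩ := Nat.exists_eq_add_of_le' hle
  have hN' : g * η ∣ N' := by simpa using (Nat.modEq_iff_dvd' hle).mp hx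
  refine S.add_mem (H N' hN' ?_) (by simpa using S.nsmul_mem hc x)
  have h1 : η * (a * M) < η * (g * (N' + x * c + a + M)) :=
    Nat.mul_lt_mul_of_pos_left hN (by omega)
  have h2 : g * η * (x * c) ≤ a * (x * M) := Nat.mul_le_mul hah hxc
  have h3 : a * x + a ≤ a * η := by rw [← Nat.mul_succ]; exact Nat.mul_le_mul_left a hxη
  nlinarith

theorem mem_of_finset_gcd_dvd (haS : a ∈ S) (ha : 0 < a) (haM : a ≤ M) {s : Finset ℕ}
    (hs : ∀ c ∈ s, c ∈ S ∧ c ≤ M) {N : ℕ} (hN : (insert a s).gcd id ∣ N)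
    (hNM : a * M < (insert a s).gcd id * (N + a + M)) : N ∈ S := by
  induction s using Finset.induction_on generalizing N with
  | empty =>
    obtain ⟨t, rfl⟩ : a ∣ N := by simpa using hN
    simpa [mul_comm] using S.nsmul_mem haS t
  | insert c s _ ih =>
    have hgcd : (insert a (insert c s)).gcd id = Nat.gcd c ((insert a s).gcd id) := by
      rw [Finset.insert_comm, Finset.gcd_insert]; rfl
    rw [hgcd] at hN hNM
    obtain ⟨hcS, hcM⟩ := hs c (Finset.mem_insert_self c s)
    exact mem_of_gcd_dvd_of_forall_dvd hcS hcM ha (Finset.gcd_dvd (Finset.mem_insert_self a s)) haM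
      (fun N hN hNM => ih (fun c hc => hs c (Finset.mem_insert_of_mem hc)) hN hNM) hN hNM

end AddSubmonoid

section Walks

variable {V : Type*} {R : V → V → Prop}

theorem hasWalk_zero (R : V → V → Prop) (v : V) : HasWalk R v v 0 :=
  ⟨fun _ => v, rfl, rfl, by simp⟩

theorem HasWalk.append {u v w : V} {m n : ℕ} (h₁ : HasWalk R u v m) (h₂ : HasWalk R v w n) :
    HasWalk R u w (m + n) := by
  obtain ⟨f, rfl, rfl, hf⟩ := h₁
  obtain ⟨g, hg0, rfl, hg⟩ := h₂
  have hright : ∀ i, m ≤ i → (if i ≤ m then f i else g (i - m)) = g (i - m) := by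
    intro i hi
    split_ifs with h
    · rw [le_antisymm h hi, Nat.sub_self, hg0]
    · rfl
  refine ⟨fun i => if i ≤ m then f i else g (i - m), by simp, ?_, fun i hi => ?_⟩
  · simpa using hright (m + n) (Nat.le_add_right m n)
  · rcases lt_or_ge i m with him | him
    · simpa [him.le, Nat.succ_le_of_lt him] using hf i him
    · simp only [hright i him, hright (i + 1) (by omega)]
      rw [show i + 1 - m = i - m + 1 by omega]
      exact hg _ (by omega)

theorem HasWalk.of_rel {u v : V} (h : R u v) : HasWalk R u v 1 :=
  ⟨fun i => if i = 0 then u else v, by simp, by simp,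
    fun i hi => by simpa [Nat.lt_one_iff.mp hi]⟩

def closedWalkLengths (R : V → V → Prop) (v : V) : AddSubmonoid ℕ where
  carrier := {n | HasWalk R v v n}
  zero_mem' := hasWalk_zero R v
  add_mem' := HasWalk.append

theorem exists_short_closed_walk {D : ℕ} {v : V} (hcyc : ∃ k, 0 < k ∧ HasWalk R v v k)
    (hdiam : ∀ u w, ∃ k ≤ D, HasWalk R u w k) :
    ∃ α, 0 < α ∧ α ≤ D + 1 ∧ HasWalk R v v α := by
  obtain ⟨k, hk, f, hf0, -, hf⟩ := hcyc
  obtain ⟨ℓ, hℓ, hw⟩ := hdiam (f 1) v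
  refine ⟨1 + ℓ, by omega, by omega, HasWalk.append (HasWalk.of_rel ?_) hw⟩
  simpa [hf0] using hf 0 hk

theorem dvd_of_hasWalk_of_dvd_short {D d ℓ : ℕ} {v : V}
    (hdiam : ∀ u w, ∃ k ≤ D, HasWalk R u w k) (hd : ∀ n ≤ 2 * D + 1, HasWalk R v v n → d ∣ n)
    (hℓ : HasWalk R v v ℓ) : d ∣ ℓ := by
  choose dist hdistD hdist using hdiam
  have hzero : ∀ n ≤ 2 * D + 1, HasWalk R v v n → (n : ZMod d) = 0 := fun n hn hw =>
    (ZMod.natCast_eq_zero_iff n d).2 (hd n hn hw)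
  obtain ⟨f, hf0, hfℓ, hf⟩ := hℓ
  have hstep : ∀ i < ℓ, (dist v (f (i + 1)) : ZMod d) = dist v (f i) + 1 := by
    intro i hi
    have hback := hzero _ (by linarith [hdistD v (f (i + 1)), hdistD (f (i + 1)) v])
      ((hdist v (f (i + 1))).append (hdist (f (i + 1)) v))
    have hedge := hzero _ (by linarith [hdistD v (f i), hdistD (f (i + 1)) v])
      (((hdist v (f i)).append (HasWalk.of_rel (hf i hi))).append (hdist (f (i + 1)) v))
    push_cast at hback hedge
    linear_combination hback - hedge
  have hlen : ∀ i ≤ ℓ, (dist v (f i) : ZMod d) = dist v (f 0) + i := by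
    intro i hi
    induction i with
    | zero => simp
    | succ i ih => rw [hstep i hi, ih (by omega)]; push_cast; ring
  have := hlen ℓ le_rfl
  rw [hfℓ, hf0] at this
  exact (ZMod.natCast_eq_zero_iff ℓ d).1 (by linear_combination -this)

theorem hasWalk_self_of_dvd_of_lt {p D N : ℕ} {v : V} (hcyc : ∃ k, 0 < k ∧ HasWalk R v v k)
    (hdiam : ∀ u w, ∃ k ≤ D, HasWalk R u w k)
    (hper1 : ∀ k, 0 < k → HasWalk R v v k → p ∣ k)
    (hper2 : ∀ d, (∀ k, 0 < k → HasWalk R v v k → d ∣ k) → d ∣ p)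
    (hN : p ∣ N) (hND : (D + 1) * (2 * D + 1) < p * (N + 3 * D + 2)) : HasWalk R v v N := by
  classical
  obtain ⟨α, hα0, hαD, hα⟩ := exists_short_closed_walk hcyc hdiam
  set s := (Finset.range (2 * D + 2)).filter (HasWalk R v v)
  have hs : ∀ c ∈ s, c ∈ closedWalkLengths R v ∧ c ≤ 2 * D + 1 := fun c hc => by
    simp only [s, Finset.mem_filter, Finset.mem_range] at hc
    exact ⟨hc.2, by omega⟩
  have hgcd : (insert α s).gcd id = p := by
    refine Nat.dvd_antisymm (hper2 _ fun k _ hk => ?_) (Finset.dvd_gcd fun n hn => ?_)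
    · refine dvd_of_hasWalk_of_dvd_short hdiam (fun n hn hw => Finset.gcd_dvd ?_) hk
      exact Finset.mem_insert_of_mem (Finset.mem_filter.2 ⟨Finset.mem_range.2 (by omega), hw⟩)
    · rcases Nat.eq_zero_or_pos n with rfl | hn0
      · exact dvd_zero p
      rcases Finset.mem_insert.1 hn with rfl | hn
      · exact hper1 n hn0 hα
      · exact hper1 n hn0 (hs n hn).1
  have hpα : p ≤ α := Nat.le_of_dvd hα0 (hper1 α hα0 hα)
  refine AddSubmonoid.mem_of_finset_gcd_dvd (S := closedWalkLengths R v) hα hα0 (by omega) hs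
    (hgcd ▸ hN) ?_
  rw [hgcd]
  obtain ⟨d, hd⟩ := Nat.exists_eq_add_of_le hαD
  nlinarith [Nat.mul_le_mul_left d (show p ≤ 2 * D + 1 by omega)]

end Walks

theorem exists_multiple_above_threshold {p D : ℕ} (hp : 0 < p) (hpD : p ≤ D + 1) :
    ∃ t, (D + 1) * (2 * D + 1) < p * (p * t + 3 * D + 2) ∧
      p * (p * t) + p * D ≤ 2 * D ^ 2 + D * p := by
  have hex : ∃ t, (D + 1) * (2 * D + 1) < p * (p * t + 3 * D + 2) := by
    refine ⟨(D + 1) * (2 * D + 1), ?_⟩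
    have := Nat.le_mul_of_pos_left ((D + 1) * (2 * D + 1)) (Nat.mul_pos hp hp)
    nlinarith
  refine ⟨Nat.find hex, Nat.find_spec hex, ?_⟩
  rcases hfind : Nat.find hex with _ | s
  · nlinarith
  · have hs : ¬ (D + 1) * (2 * D + 1) < p * (p * s + 3 * D + 2) :=
      Nat.find_min hex (by omega)
    have hquad : p * p + 3 * D + 1 ≤ 3 * p * D + 2 * p := by
      obtain ⟨q, rfl⟩ := Nat.exists_eq_add_one_of_ne_zero hp.ne'
      nlinarith
    nlinarith

theorem same_class_witness_distance_general {V : Type*} (R : V → V → Prop)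
    (p D : ℕ)
    (hSC : ∀ u v : V, ∃ k, 0 < k ∧ HasWalk R u v k)
    (hdiam : ∀ u v : V, ∃ k ≤ D, HasWalk R u v k)
    (hper1 : ∀ (a : V) (k : ℕ), 0 < k → HasWalk R a a k → p ∣ k)
    (hper2 : ∀ (a : V) (d : ℕ), (∀ k, 0 < k → HasWalk R a a k → d ∣ k) → d ∣ p)
    (a b : V) (hsame : ∀ k, HasWalk R a b k → p ∣ k) :
    ∃ (c : V) (k : ℕ), p * k ≤ 2 * D ^ 2 + D * p ∧ k ≤ 2 * D ^ 2 + D ∧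
      HasWalk R c a k ∧ HasWalk R c b k := by
  obtain ⟨α, hα0, hαD, hα⟩ := exists_short_closed_walk (hSC a a) hdiam
  have hpα : p ∣ α := hper1 a α hα0 hα
  have hp : 0 < p := Nat.pos_of_dvd_of_pos hpα hα0
  have hpD : p ≤ D + 1 := (Nat.le_of_dvd hα0 hpα).trans hαD
  obtain ⟨t, ht, hpt⟩ := exists_multiple_above_threshold hp hpD
  obtain ⟨e, heD, hab⟩ := hdiam a b
  have hclosed := fun N => hasWalk_self_of_dvd_of_lt (N := N) (hSC a a) hdiam (hper1 a) (hper2 a)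
  have hbound : p * (p * t + e) ≤ 2 * D ^ 2 + D * p := by nlinarith
  refine ⟨a, p * t + e, hbound, by nlinarith, ?_, (hclosed _ (dvd_mul_right p t) ht).append hab⟩
  exact hclosed _ (dvd_add (dvd_mul_right p t) (hsame e hab)) (by nlinarith)

/-- In a finite strongly connected graph of period `p` and diameter at most `D`, two
vertices `a`, `b` in the same cyclic class have a common witness at distance
`k ≤ 2D^2/p + D` (in particular `k ≤ 2D^2 + D`). -/
theorem same_class_witness_distance {V : Type*} [Fintype V] (R : V → V → Prop)
    (p D : ℕ) (hp : 0 < p)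
    (hSC : ∀ u v : V, ∃ k, 0 < k ∧ HasWalk R u v k)
    (hdiam : ∀ u v : V, ∃ k ≤ D, HasWalk R u v k)
    (hper1 : ∀ (a : V) (k : ℕ), 0 < k → HasWalk R a a k → p ∣ k)
    (hper2 : ∀ (a : V) (d : ℕ), (∀ k, 0 < k → HasWalk R a a k → d ∣ k) → d ∣ p)
    (a b : V) (hsame : ∀ k, HasWalk R a b k → p ∣ k) :
    ∃ (c : V) (k : ℕ), p * k ≤ 2 * D ^ 2 + D * p ∧ k ≤ 2 * D ^ 2 + D ∧
      HasWalk R c a k ∧ HasWalk R c b k :=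
  same_class_witness_distance_general R p D hSC hdiam hper1 hper2 a b hsame
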